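/- arXiv:1411.2129 — 8 statements merged into one kernel-verified Lean document; each statement's English description precedes it below -/
import Mathlib

section
/- Let U ⊆ ℝⁿ be an open set closed under multiplication by positive scalars, let ϑ ∈ ℝ, and let F : ℝⁿ → ℝ satisfy F(t • x) = F(x) − ϑ * log t for all x ∈ U and all t > 0. If F is three times continuously differentiable on U, then for every x ∈ U and all h, h' ∈ ℝⁿ, the third derivative satisfies D³F(x)[x, h, h'] = −2 · D²F(x)[h, h']. -/
/-!
Logarithmic homogeneity says that `F ∘ (t • ·)` differs from `F` on `U` by a constant, so every
derivative of order `k ≥ 1` scales like `t⁻ᵏ`. In particular `G := D²F` satisfies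
`G (t • x) = t⁻² • G x`, and differentiating at `t = 1` (Euler's identity) gives
`DG(x)[x] = -2 • G x`, which is `D³F(x)[x, ·, ·] = -2 • D²F(x)`.
-/

open Filter Topology

section

variable {𝕜 E F : Type*} [NontriviallyNormedField 𝕜] [NormedAddCommGroup E] [NormedSpace 𝕜 E]
  [NormedAddCommGroup F] [NormedSpace 𝕜 F]

theorem iteratedFDerivWithin_add_const_of_ne {f : E → F} {s : Set E} {x : E} {k : ℕ}
    (hk : k ≠ 0) (hs : UniqueDiffOn 𝕜 s) (hx : x ∈ s) (c : F) :
    iteratedFDerivWithin 𝕜 k (fun y => f y + c) s x = iteratedFDerivWithin 𝕜 k f s x := by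
  obtain ⟨k, rfl⟩ := Nat.exists_eq_succ_of_ne_zero hk
  simp only [iteratedFDerivWithin_succ_eq_comp_right hs hx, Function.comp_apply,
    fderivWithin_add_const]

theorem iteratedFDerivWithin_smul_of_add_const {f : E → F} {s : Set E} {x : E} {t : 𝕜} {c : F}
    {k : ℕ} (hk : k ≠ 0) (ht : t ≠ 0) (hs : UniqueDiffOn 𝕜 s) (hts : (t • ·) ⁻¹' s = s)
    (hf : ∀ y ∈ s, f (t • y) = f y + c) (hx : x ∈ s) :
    iteratedFDerivWithin 𝕜 k f s (t • x) = (t ^ k)⁻¹ • iteratedFDerivWithin 𝕜 k f s x := by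
  let e : E ≃L[𝕜] E := ContinuousLinearEquiv.smulLeft (Units.mk0 t ht)
  have he : ⇑e = (t • ·) := rfl
  have hex : e x ∈ s := by rw [← hts] at hx; exact hx
  have hscale : iteratedFDerivWithin 𝕜 k f s x = t ^ k • iteratedFDerivWithin 𝕜 k f s (t • x) :=
    calc iteratedFDerivWithin 𝕜 k f s x
        = iteratedFDerivWithin 𝕜 k (fun y => f y + c) s x :=
          (iteratedFDerivWithin_add_const_of_ne hk hs hx c).symm
      _ = iteratedFDerivWithin 𝕜 k (f ∘ e) (e ⁻¹' s) x := by
          rw [he, hts]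
          exact iteratedFDerivWithin_congr (fun y hy => (hf y hy).symm) hx k
      _ = (iteratedFDerivWithin 𝕜 k f s (e x)).compContinuousLinearMap fun _ => e :=
          e.iteratedFDerivWithin_comp_right f hs hex k
      _ = t ^ k • iteratedFDerivWithin 𝕜 k f s (t • x) := by
          ext m
          simp only [ContinuousMultilinearMap.compContinuousLinearMap_apply,
            ContinuousLinearEquiv.coe_coe, he, ContinuousMultilinearMap.map_smul_univ,
            Finset.prod_const, Finset.card_univ, Fintype.card_fin,
            smul_apply]
  rw [hscale, smul_smul, inv_mul_cancel₀ (pow_ne_zero k ht), one_smul]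

theorem fderiv_apply_self_of_zpow_homogeneous {G : E → F} {x : E} {m : ℤ}
    (hG : DifferentiableAt 𝕜 G x) (hhom : ∀ᶠ t in 𝓝 (1 : 𝕜), G (t • x) = t ^ m • G x) :
    fderiv 𝕜 G x x = (m : 𝕜) • G x := by
  have hray : HasDerivAt (fun t : 𝕜 => G (t • x)) (fderiv 𝕜 G x x) 1 := by
    have hline : HasDerivAt (fun t : 𝕜 => t • x) x 1 := by
      simpa using (hasDerivAt_id (1 : 𝕜)).smul_const x
    exact hG.hasFDerivAt.comp_hasDerivAt_of_eq 1 hline (one_smul 𝕜 x).symm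
  have hpow : HasDerivAt (fun t : 𝕜 => t ^ m • G x) ((m : 𝕜) • G x) 1 := by
    simpa using (hasDerivAt_zpow m (1 : 𝕜) (Or.inl one_ne_zero)).smul_const (G x)
  exact hray.unique (hpow.congr_of_eventuallyEq hhom)

end

theorem preimage_smul_eq_of_pos {E : Type*} [AddCommGroup E] [Module ℝ E] {s : Set E}
    (hcone : ∀ x ∈ s, ∀ t : ℝ, 0 < t → t • x ∈ s) {t : ℝ} (ht : 0 < t) :
    (t • ·) ⁻¹' s = s := by
  ext y
  refine ⟨fun hy => ?_, fun hy => hcone y hy t ht⟩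
  simpa [smul_smul, ht.ne'] using hcone _ hy t⁻¹ (inv_pos.2 ht)

/-- For a ϑ-logarithmically homogeneous `F`: `D³F(x)[x, h, h'] = -2 · D²F(x)[h, h']`. -/
theorem stmt_3 (n : ℕ) (U : Set (EuclideanSpace ℝ (Fin n)))
    (hU : IsOpen U) (hcone : ∀ x ∈ U, ∀ t : ℝ, 0 < t → t • x ∈ U)
    (ϑ : ℝ) (F : EuclideanSpace ℝ (Fin n) → ℝ)
    (hhom : ∀ x ∈ U, ∀ t : ℝ, 0 < t → F (t • x) = F x - ϑ * Real.log t)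
    (hF : ContDiffOn ℝ 3 F U) :
    ∀ x ∈ U, ∀ h h' : EuclideanSpace ℝ (Fin n),
      iteratedFDerivWithin ℝ 3 F U x ![x, h, h']
        = -2 * iteratedFDerivWithin ℝ 2 F U x ![h, h'] := by
  intro x hx h h'
  have hs : UniqueDiffOn ℝ U := hU.uniqueDiffOn
  set G := iteratedFDerivWithin ℝ 2 F U
  have hGx : DifferentiableAt ℝ G x :=
    (hF.differentiableOn_iteratedFDerivWithin (by norm_num) hs x hx).differentiableAt
      (hU.mem_nhds hx)
  have hGhom : ∀ᶠ t in 𝓝 (1 : ℝ), G (t • x) = t ^ (-2 : ℤ) • G x := by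
    filter_upwards [eventually_gt_nhds one_pos] with t ht
    have hshift : ∀ y ∈ U, F (t • y) = F y + -(ϑ * Real.log t) := fun y hy => by
      rw [hhom y hy t ht, sub_eq_add_neg]
    rw [zpow_neg, zpow_ofNat]
    exact iteratedFDerivWithin_smul_of_add_const two_ne_zero ht.ne' hs
      (preimage_smul_eq_of_pos hcone ht) hshift hx
  have heuler := fderiv_apply_self_of_zpow_homogeneous hGx hGhom
  calc iteratedFDerivWithin ℝ 3 F U x ![x, h, h']
      = fderivWithin ℝ G U x x ![h, h'] := by
        rw [iteratedFDerivWithin_succ_apply_left]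
        rfl
    _ = -2 * G x ![h, h'] := by
        rw [fderivWithin_of_isOpen hU hx, heuler]
        simp
end

section
/- Let K ⊆ ℝⁿ be an open convex cone, ϑ > 0, and let F : ℝⁿ → ℝ be convex and differentiable on K with F(t • x) = F(x) − ϑ * log t for all x ∈ K and all t > 0. Let x ∈ K, let s ∈ ℝⁿ, and suppose x̃ ∈ K satisfies ∇F(x̃) = −s (so x̃ is a maximizer of z ↦ −⟨s, z⟩ − F(z) on K). Set s̃ := −∇F(x), μ := ⟨s, x⟩ / ϑ, and μ̃ := ⟨s̃, x̃⟩ / ϑ. Then μ > 0, μ̃ > 0, and μ · μ̃ ≥ 1. Moreover, if F is strictly convex on K, then equality μ · μ̃ = 1 holds if and only if x = μ • x̃. -/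
open scoped RealInnerProductSpace

/-!
Euler's identity `⟪∇F a, a⟫ = -ϑ` turns the tangent inequality of `F` at `b`, evaluated at a ray
point `t • a`, into `F b + ϑ + t ⟪∇F b, a⟫ ≤ F a - ϑ log t` for all `t > 0`. Letting `t` grow
forces `⟪∇F b, a⟫ < 0`; writing `⟪∇F b, a⟫ = -ϑ m` and taking `t = 1 / m` gives
`F b ≤ F a + ϑ log m`, strictly under strict convexity unless `a = m • b`. For `(a, b) = (x, x̃)`
the number `m` is `μ`, for `(a, b) = (x̃, x)` it is `μ̃`, and adding the two bounds gives
`log (μ μ̃) ≥ 0`.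
-/

open InnerProductSpace

section

variable {E : Type*} [NormedAddCommGroup E] [InnerProductSpace ℝ E] [CompleteSpace E]
  {K : Set E} {F : E → ℝ} {a b : E}

theorem DifferentiableAt.hasDerivAt_comp_lineMap (hd : DifferentiableAt ℝ F a) (y : E) :
    HasDerivAt (F ∘ AffineMap.lineMap (k := ℝ) a y) ⟪gradient F a, y - a⟫ 0 := by
  have hF' : HasFDerivAt F (toDual ℝ E (gradient F a)) (AffineMap.lineMap a y (0 : ℝ)) := by
    simpa using hasGradientAt_iff_hasFDerivAt.1 hd.hasGradientAt
  simpa using hF'.comp_hasDerivAt (0 : ℝ) (AffineMap.hasDerivAt_lineMap (a := a) (b := y))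

theorem ConvexOn.inner_gradient_sub_le (hF : ConvexOn ℝ K F) (hd : DifferentiableAt ℝ F a)
    (ha : a ∈ K) (hb : b ∈ K) : ⟪gradient F a, b - a⟫ ≤ F b - F a := by
  have hline := (hF.comp_affineMap (AffineMap.lineMap a b)).le_slope_of_hasDerivAt
    (x := 0) (y := 1) (by simpa using ha) (by simpa using hb) one_pos
    (hd.hasDerivAt_comp_lineMap b)
  simpa [slope_def_field] using hline

theorem StrictConvexOn.inner_gradient_sub_lt (hF : StrictConvexOn ℝ K F)
    (hd : DifferentiableAt ℝ F a) (ha : a ∈ K) (hb : b ∈ K) (hab : b ≠ a) :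
    ⟪gradient F a, b - a⟫ < F b - F a := by
  have h2 : (0 : ℝ) < 2⁻¹ := by norm_num
  have hmid : F ((2⁻¹ : ℝ) • a + (2⁻¹ : ℝ) • b) < 2⁻¹ * F a + 2⁻¹ * F b :=
    hF.2 ha hb hab.symm h2 h2 (by norm_num)
  have htangent := hF.convexOn.inner_gradient_sub_le hd ha (hF.1 ha hb h2.le h2.le (by norm_num))
  rw [show (2⁻¹ : ℝ) • a + (2⁻¹ : ℝ) • b - a = (2⁻¹ : ℝ) • (b - a) by module,
    real_inner_smul_right] at htangent
  linarith

def IsLogHomogeneousOn (K : Set E) (F : E → ℝ) (ϑ : ℝ) : Prop :=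
  ∀ x ∈ K, ∀ t : ℝ, 0 < t → F (t • x) = F x - ϑ * Real.log t

namespace IsLogHomogeneousOn

variable {ϑ : ℝ}

theorem inner_gradient_self (hF : IsLogHomogeneousOn K F ϑ) (hd : DifferentiableAt ℝ F a)
    (ha : a ∈ K) : ⟪gradient F a, a⟫ = -ϑ := by
  have hray : HasDerivAt (F ∘ fun t : ℝ => t • a) ⟪gradient F a, a⟫ 1 := by
    have hF' : HasFDerivAt F (toDual ℝ E (gradient F a)) ((1 : ℝ) • a) := by
      simpa using hasGradientAt_iff_hasFDerivAt.1 hd.hasGradientAt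
    simpa using hF'.comp_hasDerivAt (1 : ℝ) ((hasDerivAt_id (1 : ℝ)).smul_const a)
  have hlog : HasDerivAt (fun t : ℝ => F a - ϑ * Real.log t) (-ϑ) 1 := by
    simpa using ((Real.hasDerivAt_log one_ne_zero).const_mul ϑ).const_sub (F a)
  refine hray.unique (hlog.congr_of_eventuallyEq ?_)
  filter_upwards [Ioi_mem_nhds one_pos] with t ht using hF a ha t ht

variable (hF : IsLogHomogeneousOn K F ϑ) (hcone : ∀ x ∈ K, ∀ t : ℝ, 0 < t → t • x ∈ K)
  (hd : DifferentiableAt ℝ F b) (ha : a ∈ K) (hb : b ∈ K)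
include hF hcone hd ha hb

theorem add_mul_inner_gradient_le (hconv : ConvexOn ℝ K F) {t : ℝ} (ht : 0 < t) :
    F b + ϑ + t * ⟪gradient F b, a⟫ ≤ F a - ϑ * Real.log t := by
  have h := hconv.inner_gradient_sub_le hd hb (hcone a ha t ht)
  rw [inner_sub_right, real_inner_smul_right, hF.inner_gradient_self hd hb, hF a ha t ht] at h
  linarith

theorem add_mul_inner_gradient_lt (hconv : StrictConvexOn ℝ K F) {t : ℝ} (ht : 0 < t)
    (hne : t • a ≠ b) : F b + ϑ + t * ⟪gradient F b, a⟫ < F a - ϑ * Real.log t := by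
  have h := hconv.inner_gradient_sub_lt hd hb (hcone a ha t ht) hne
  rw [inner_sub_right, real_inner_smul_right, hF.inner_gradient_self hd hb, hF a ha t ht] at h
  linarith

theorem inner_gradient_neg (hconv : ConvexOn ℝ K F) (hϑ : 0 < ϑ) : ⟪gradient F b, a⟫ < 0 := by
  -- at this `t` the right-hand side of the tangent bound is exactly `F b`
  have h := hF.add_mul_inner_gradient_le hcone hd ha hb hconv (Real.exp_pos ((F a - F b) / ϑ))
  rw [Real.log_exp, mul_div_cancel₀ _ hϑ.ne'] at h
  have : Real.exp ((F a - F b) / ϑ) * ⟪gradient F b, a⟫ < 0 := by linarith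
  exact neg_of_mul_neg_right this (Real.exp_pos _).le

theorem le_add_mul_log (hconv : ConvexOn ℝ K F) {m : ℝ} (hm : 0 < m)
    (hab : ⟪gradient F b, a⟫ = -(ϑ * m)) : F b ≤ F a + ϑ * Real.log m := by
  have h := hF.add_mul_inner_gradient_le hcone hd ha hb hconv (inv_pos.2 hm)
  rw [hab, Real.log_inv] at h
  field_simp at h
  linarith

theorem lt_add_mul_log (hconv : StrictConvexOn ℝ K F) {m : ℝ} (hm : 0 < m)
    (hab : ⟪gradient F b, a⟫ = -(ϑ * m)) (hne : a ≠ m • b) : F b < F a + ϑ * Real.log m := by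
  have hne' : m⁻¹ • a ≠ b := fun h => hne (by rw [← h, smul_inv_smul₀ hm.ne'])
  have h := hF.add_mul_inner_gradient_lt hcone hd ha hb hconv (inv_pos.2 hm) hne'
  rw [hab, Real.log_inv] at h
  field_simp at h
  linarith

end IsLogHomogeneousOn

end

theorem stmt_4_general (n : ℕ) (K : Set (EuclideanSpace ℝ (Fin n)))
    (hK : IsOpen K)
    (hcone : ∀ x ∈ K, ∀ t : ℝ, 0 < t → t • x ∈ K)
    (ϑ : ℝ) (hϑ : 0 < ϑ) (F : EuclideanSpace ℝ (Fin n) → ℝ)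
    (hFconv : ConvexOn ℝ K F) (hFdiff : DifferentiableOn ℝ F K)
    (hhom : ∀ x ∈ K, ∀ t : ℝ, 0 < t → F (t • x) = F x - ϑ * Real.log t)
    (x : EuclideanSpace ℝ (Fin n)) (hx : x ∈ K)
    (s : EuclideanSpace ℝ (Fin n))
    (xt : EuclideanSpace ℝ (Fin n)) (hxt : xt ∈ K)
    (hgrad : gradient F xt = -s)
    (st : EuclideanSpace ℝ (Fin n)) (hst : st = -gradient F x)
    (μ μt : ℝ) (hμ : μ = ⟪s, x⟫ / ϑ) (hμt : μt = ⟪st, xt⟫ / ϑ) :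
    0 < μ ∧ 0 < μt ∧ 1 ≤ μ * μt ∧
      (StrictConvexOn ℝ K F → (μ * μt = 1 ↔ x = μ • xt)) := by
  have hF : IsLogHomogeneousOn K F ϑ := hhom
  have hdx := hFdiff.differentiableAt (hK.mem_nhds hx)
  have hdxt := hFdiff.differentiableAt (hK.mem_nhds hxt)
  have hxtx : ⟪gradient F xt, x⟫ = -(ϑ * μ) := by
    rw [hgrad, hμ, inner_neg_left, mul_div_cancel₀ _ hϑ.ne']
  have hxxt : ⟪gradient F x, xt⟫ = -(ϑ * μt) := by
    rw [hμt, hst, mul_div_cancel₀ _ hϑ.ne', inner_neg_left, neg_neg]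
  have hμ_pos : 0 < μ := by
    have h := hF.inner_gradient_neg hcone hdxt hx hxt hFconv hϑ
    exact pos_of_mul_pos_right (by linarith) hϑ.le
  have hμt_pos : 0 < μt := by
    have h := hF.inner_gradient_neg hcone hdx hxt hx hFconv hϑ
    exact pos_of_mul_pos_right (by linarith) hϑ.le
  have hle := hF.le_add_mul_log hcone hdxt hx hxt hFconv hμ_pos hxtx
  have hle' := hF.le_add_mul_log hcone hdx hxt hx hFconv hμt_pos hxxt
  have hlog : ϑ * Real.log (μ * μt) = ϑ * Real.log μ + ϑ * Real.log μt := by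
    rw [Real.log_mul hμ_pos.ne' hμt_pos.ne', mul_add]
  refine ⟨hμ_pos, hμt_pos, ?_, fun hstrict => ⟨fun heq => ?_, fun heq => ?_⟩⟩
  · rw [← Real.log_nonneg_iff (mul_pos hμ_pos hμt_pos), ← mul_nonneg_iff_of_pos_left hϑ]
    linarith
  · by_contra hne
    have hlt := hF.lt_add_mul_log hcone hdxt hx hxt hstrict hμ_pos hxtx hne
    rw [heq, Real.log_one, mul_zero] at hlog
    linarith
  · have heuler := hF.inner_gradient_self hdx hx
    nth_rewrite 2 [heq] at heuler
    rw [real_inner_smul_right, hxxt] at heuler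
    exact mul_left_cancel₀ hϑ.ne' (by linear_combination -heuler)

/-- Nesterov–Todd lemma: `μ μ̃ ≥ 1`, with equality iff `x = μ • x̃` (for strictly
convex `F`). -/
theorem stmt_4 (n : ℕ) (K : Set (EuclideanSpace ℝ (Fin n)))
    (hK : IsOpen K) (hKconv : Convex ℝ K)
    (hcone : ∀ x ∈ K, ∀ t : ℝ, 0 < t → t • x ∈ K)
    (ϑ : ℝ) (hϑ : 0 < ϑ) (F : EuclideanSpace ℝ (Fin n) → ℝ)
    (hFconv : ConvexOn ℝ K F) (hFdiff : DifferentiableOn ℝ F K)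
    (hhom : ∀ x ∈ K, ∀ t : ℝ, 0 < t → F (t • x) = F x - ϑ * Real.log t)
    (x : EuclideanSpace ℝ (Fin n)) (hx : x ∈ K)
    (s : EuclideanSpace ℝ (Fin n))
    (xt : EuclideanSpace ℝ (Fin n)) (hxt : xt ∈ K)
    (hgrad : gradient F xt = -s)
    (st : EuclideanSpace ℝ (Fin n)) (hst : st = -gradient F x)
    (μ μt : ℝ) (hμ : μ = ⟪s, x⟫ / ϑ) (hμt : μt = ⟪st, xt⟫ / ϑ) :
    0 < μ ∧ 0 < μt ∧ 1 ≤ μ * μt ∧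
      (StrictConvexOn ℝ K F → (μ * μt = 1 ↔ x = μ • xt)) :=
  stmt_4_general n K hK hcone ϑ hϑ F hFconv hFdiff hhom x hx s xt hxt hgrad st hst μ μt hμ hμt
end

section
/- Work in ℝⁿ with the standard inner product ⟨·,·⟩. Let ϑ > 0, γ ∈ [0,1], and let x, x̃, s, s̃ ∈ ℝⁿ satisfy ⟨s, x̃⟩ = ϑ and ⟨s, x⟩ = ϑμ with μ > 0. Let T be a self-adjoint positive-definite linear map on ℝⁿ with T² s = x and T² s̃ = x̃, and set v := T s and w := T s̃. Suppose d_x, d_s ∈ ℝⁿ satisfy ⟨d_x, d_s⟩ = 0 and T⁻¹ d_x + T d_s = −v + γ μ w. Then for every α ∈ ℝ, ⟨x + α d_x, s + α d_s⟩ = (1 − α(1 − γ)) ⟨x, s⟩. -/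
open Matrix

lemma sym_dot_aux {n : ℕ} (A : Matrix (Fin n) (Fin n) ℝ) (hA : Aᵀ = A)
    (u y : Fin n → ℝ) : u ⬝ᵥ (A *ᵥ y) = (A *ᵥ u) ⬝ᵥ y := by
  rw [dotProduct_mulVec, ← mulVec_transpose, hA]

/-- Lemma 2.2: `⟨x(α), s(α)⟩ = (1 - α(1-γ)) ⟨x, s⟩` for the scaled search
directions. -/
theorem stmt_5 (n : ℕ) (ϑ μ γ : ℝ) (hϑ : 0 < ϑ) (hμ : 0 < μ)
    (hγ : γ ∈ Set.Icc (0:ℝ) 1)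
    (x xt s st : Fin n → ℝ)
    (hsx : s ⬝ᵥ x = ϑ * μ) (hsxt : s ⬝ᵥ xt = ϑ)
    (T : Matrix (Fin n) (Fin n) ℝ) (hT : T.PosDef)
    (hT2s : (T * T) *ᵥ s = x) (hT2st : (T * T) *ᵥ st = xt)
    (v w : Fin n → ℝ) (hv : v = T *ᵥ s) (hw : w = T *ᵥ st)
    (dx ds : Fin n → ℝ) (horth : dx ⬝ᵥ ds = 0)
    (hdir : T⁻¹ *ᵥ dx + T *ᵥ ds = -v + (γ * μ) • w) :
    ∀ α : ℝ, (x + α • dx) ⬝ᵥ (s + α • ds) = (1 - α * (1 - γ)) * (x ⬝ᵥ s) := by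
  have hTsym : Tᵀ = T := hT.isHermitian
  have hTinvsym : (T⁻¹)ᵀ = T⁻¹ := by rw [transpose_nonsing_inv, hTsym]
  have hTinv : T⁻¹ * T = 1 := nonsing_inv_mul T (isUnit_iff_ne_zero.mpr hT.det_pos.ne')
  -- term 1 : (T⁻¹ *ᵥ dx) ⬝ᵥ v = dx ⬝ᵥ s
  have h1 : (T⁻¹ *ᵥ dx) ⬝ᵥ v = dx ⬝ᵥ s := by
    rw [hv, ← sym_dot_aux _ hTinvsym, mulVec_mulVec, hTinv, one_mulVec]
  -- term 2 : (T *ᵥ ds) ⬝ᵥ v = ds ⬝ᵥ x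
  have h2 : (T *ᵥ ds) ⬝ᵥ v = ds ⬝ᵥ x := by
    rw [hv, ← sym_dot_aux _ hTsym, mulVec_mulVec, hT2s]
  have hTTsym : (T * T)ᵀ = T * T := by rw [transpose_mul, hTsym]
  have hvv : v ⬝ᵥ v = ϑ * μ := by
    rw [hv, ← sym_dot_aux _ hTsym, mulVec_mulVec, hT2s]
    exact hsx
  have hwv : w ⬝ᵥ v = ϑ := by
    rw [hw, hv, ← sym_dot_aux _ hTsym, mulVec_mulVec, sym_dot_aux _ hTTsym, hT2st]
    exact (dotProduct_comm xt s).trans hsxt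
  have key : dx ⬝ᵥ s + ds ⬝ᵥ x = -(ϑ * μ) + γ * μ * ϑ := by
    have := congrArg (· ⬝ᵥ v) hdir
    simpa [add_dotProduct, neg_dotProduct, smul_dotProduct, h1, h2, hvv, hwv]
      using this
  have hxs : x ⬝ᵥ s = ϑ * μ := by rw [dotProduct_comm, hsx]
  intro α
  have hds : dx ⬝ᵥ s = dx ⬝ᵥ s := rfl
  have expand : (x + α • dx) ⬝ᵥ (s + α • ds)
      = x ⬝ᵥ s + α * (dx ⬝ᵥ s) + α * (x ⬝ᵥ ds) + α * α * (dx ⬝ᵥ ds) := by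
    simp [add_dotProduct, dotProduct_add, smul_dotProduct, dotProduct_smul,
      smul_eq_mul]
    ring
  rw [expand, horth, hxs]
  have : x ⬝ᵥ ds = ds ⬝ᵥ x := dotProduct_comm _ _
  rw [this]
  linear_combination α * key
end

section
/- Let C ⊆ ℝⁿ be an open convex cone. Let G : ℝⁿ → ℝ be twice continuously differentiable on C, with ∇G(t • z) = t⁻¹ • ∇G(z) for all z ∈ C and t > 0, and with the Hessian ∇²G(z) self-adjoint and positive definite for every z ∈ C. Fix s ∈ C, s̃ ∈ C and μ > 0, and define δ := s − μ • s̃, x := −μ • ∇G(μ • s̃), x̃ := −∇G(s), and the linear map T² := μ • ∫₀¹ ∇²G(s − t • δ) dt. Then T² is self-adjoint and positive definite, T² s = x, and T² s̃ = x̃. -/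
open scoped RealInnerProductSpace
open Set MeasureTheory

/-!
Write `A = ∫₀¹ ∇²G(s - tδ) dt`, so `T² = μ A`. The segment from `s` to `s - δ = μs̃` lies in `C`,
so symmetry and positive definiteness of the Hessian pass to the integral. Along the segment the
fundamental theorem of calculus gives `A δ = ∇G(s) - ∇G(μs̃)`. Differentiating the homogeneity of
`∇G` at `t = 1` gives Euler's identity `∇²G(z) z = -∇G(z)`, and with it `t ∇G(s - tδ)` is a
primitive of `-∇²G(s - tδ) s`, whence `A s = -∇G(μs̃)`. Finally
`μ A s̃ = A (s - δ) = A s - A δ = -∇G(s)`.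
-/

theorem ContDiffOn.gradient_of_isOpen {F : Type*} [NormedAddCommGroup F] [InnerProductSpace ℝ F]
    [CompleteSpace F] {f : F → ℝ} {s : Set F} {m n : WithTop ℕ∞} (hf : ContDiffOn ℝ n f s)
    (hs : IsOpen s) (hmn : m + 1 ≤ n) : ContDiffOn ℝ m (gradient f) s :=
  (InnerProductSpace.toDual ℝ F).symm.contDiff.comp_contDiffOn (hf.fderiv_of_isOpen hs hmn)

section Normed

variable {E F : Type*} [NormedAddCommGroup E] [NormedSpace ℝ E] [NormedAddCommGroup F]
  [NormedSpace ℝ F]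

theorem fderiv_apply_self_eq_neg_of_map_smul_eq_inv_smul {f : E → F} {z : E}
    (hf : DifferentiableAt ℝ f z) (hhom : ∀ t : ℝ, 0 < t → f (t • z) = t⁻¹ • f z) :
    fderiv ℝ f z z = -f z := by
  have hray : HasDerivAt (fun t : ℝ => f (t • z)) (fderiv ℝ f z z) 1 := by
    simpa [Function.comp_def] using hf.hasFDerivAt.comp_hasDerivAt_of_eq (x := (1 : ℝ))
      (by simpa using (hasDerivAt_id (1 : ℝ)).smul_const z) (one_smul ℝ z).symm
  have hinv : HasDerivAt (fun t : ℝ => t⁻¹ • f z) (-f z) 1 := by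
    simpa using (hasDerivAt_inv (one_ne_zero' ℝ)).smul_const (f z)
  refine hray.unique (hinv.congr_of_eventuallyEq ?_)
  filter_upwards [eventually_gt_nhds zero_lt_one] with t ht using hhom t ht

variable {f : E → F} {f' : E → E →L[ℝ] F} {a d : E}

theorem hasDerivAt_comp_sub_smul {t : ℝ} (hf : HasFDerivAt f (f' (a - t • d)) (a - t • d)) :
    HasDerivAt (fun t : ℝ => f (a - t • d)) (-f' (a - t • d) d) t := by
  simpa [Function.comp_def] using
    hf.comp_hasDerivAt t (((hasDerivAt_id t).smul_const d).const_sub a)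

variable [CompleteSpace F]

theorem intervalIntegral_fderiv_apply_dir_eq_sub
    (hf : ∀ t ∈ Icc (0 : ℝ) 1, HasFDerivAt f (f' (a - t • d)) (a - t • d))
    (hf' : ContinuousOn (fun t : ℝ => f' (a - t • d)) (Icc 0 1)) :
    (∫ t in (0 : ℝ)..1, f' (a - t • d)) d = f a - f (a - d) := by
  have hftc := intervalIntegral.integral_eq_sub_of_hasDerivAt
    (fun t ht => hasDerivAt_comp_sub_smul (hf t (by rwa [uIcc_of_le zero_le_one] at ht)))
    ((hf'.clm_apply continuousOn_const).neg.intervalIntegrable_of_Icc zero_le_one)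
  rw [intervalIntegral.integral_neg] at hftc
  rw [ContinuousLinearMap.intervalIntegral_apply (hf'.intervalIntegrable_of_Icc zero_le_one)]
  simp only [one_smul, zero_smul, sub_zero] at hftc
  rw [← neg_sub, ← hftc, neg_neg]

theorem intervalIntegral_fderiv_apply_base_eq_neg
    (hf : ∀ t ∈ Icc (0 : ℝ) 1, HasFDerivAt f (f' (a - t • d)) (a - t • d))
    (hf' : ContinuousOn (fun t : ℝ => f' (a - t • d)) (Icc 0 1))
    (heuler : ∀ t ∈ Icc (0 : ℝ) 1, f' (a - t • d) (a - t • d) = -f (a - t • d)) :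
    (∫ t in (0 : ℝ)..1, f' (a - t • d)) a = -f (a - d) := by
  have hderiv : ∀ t ∈ uIcc (0 : ℝ) 1,
      HasDerivAt (fun t : ℝ => t • f (a - t • d)) (-f' (a - t • d) a) t := by
    intro t ht
    rw [uIcc_of_le zero_le_one] at ht
    refine ((hasDerivAt_id' t).smul (hasDerivAt_comp_sub_smul (hf t ht))).congr_deriv ?_
    symm
    calc -f' (a - t • d) a = -f' (a - t • d) ((a - t • d) + t • d) := by rw [sub_add_cancel]
      _ = _ := by rw [map_add, map_smul, heuler t ht]; module
  have hftc := intervalIntegral.integral_eq_sub_of_hasDerivAt hderiv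
    ((hf'.clm_apply continuousOn_const).neg.intervalIntegrable_of_Icc zero_le_one)
  rw [intervalIntegral.integral_neg] at hftc
  rw [ContinuousLinearMap.intervalIntegral_apply (hf'.intervalIntegrable_of_Icc zero_le_one)]
  simp only [one_smul, zero_smul, sub_zero] at hftc
  rw [← hftc, neg_neg]

end Normed

section InnerProduct

variable {E : Type*} [NormedAddCommGroup E] [InnerProductSpace ℝ E] [CompleteSpace E]
  {L : ℝ → E →L[ℝ] E} {a b : ℝ}

theorem inner_intervalIntegral_apply (hL : IntervalIntegrable L volume a b) (u w : E) :
    ⟪(∫ t in a..b, L t) u, w⟫ = ∫ t in a..b, ⟪L t u, w⟫ :=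
  (((innerSLFlip ℝ w).comp (ContinuousLinearMap.apply ℝ E u)).intervalIntegral_comp_comm hL).symm

theorem isSymmetric_intervalIntegral (hL : IntervalIntegrable L volume a b)
    (hsymm : ∀ t ∈ uIcc a b, (L t : E →ₗ[ℝ] E).IsSymmetric) :
    ((∫ t in a..b, L t : E →L[ℝ] E) : E →ₗ[ℝ] E).IsSymmetric := by
  intro u w
  simp only [ContinuousLinearMap.coe_coe]
  rw [← real_inner_comm u, inner_intervalIntegral_apply hL, inner_intervalIntegral_apply hL]
  exact intervalIntegral.integral_congr fun t ht => (hsymm t ht u w).trans (real_inner_comm _ _)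

theorem inner_intervalIntegral_apply_self_pos (hab : a < b) (hL : ContinuousOn L (Icc a b))
    {u : E} (hpos : ∀ t ∈ Icc a b, 0 < ⟪L t u, u⟫) : 0 < ⟪(∫ t in a..b, L t) u, u⟫ := by
  rw [inner_intervalIntegral_apply (hL.intervalIntegrable_of_Icc hab.le)]
  exact intervalIntegral.intervalIntegral_pos_of_pos_on
    (((hL.clm_apply continuousOn_const).inner continuousOn_const).intervalIntegrable_of_Icc hab.le)
    (fun t ht => hpos t (Ioo_subset_Icc_self ht)) hab

end InnerProduct

/-- The dual integral scaling `T² = μ ∫₀¹ ∇²G(s - tδ) dt` is self-adjoint,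
positive definite, maps `s` to `x` and `s̃` to `x̃`. -/
theorem stmt_6 (n : ℕ) (C : Set (EuclideanSpace ℝ (Fin n)))
    (hC : IsOpen C) (hCconv : Convex ℝ C)
    (hcone : ∀ z ∈ C, ∀ t : ℝ, 0 < t → t • z ∈ C)
    (G : EuclideanSpace ℝ (Fin n) → ℝ) (hG : ContDiffOn ℝ 2 G C)
    (hgradhom : ∀ z ∈ C, ∀ t : ℝ, 0 < t → gradient G (t • z) = t⁻¹ • gradient G z)
    (hHessSym : ∀ z ∈ C, ∀ u w : EuclideanSpace ℝ (Fin n),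
        ⟪fderiv ℝ (gradient G) z u, w⟫ = ⟪u, fderiv ℝ (gradient G) z w⟫)
    (hHessPD : ∀ z ∈ C, ∀ u : EuclideanSpace ℝ (Fin n), u ≠ 0 →
        0 < ⟪fderiv ℝ (gradient G) z u, u⟫)
    (s st : EuclideanSpace ℝ (Fin n)) (hs : s ∈ C) (hst : st ∈ C)
    (μ : ℝ) (hμ : 0 < μ)
    (δ x xt : EuclideanSpace ℝ (Fin n))
    (hδ : δ = s - μ • st)
    (hx : x = -(μ • gradient G (μ • st)))
    (hxt : xt = -gradient G s)
    (T2 : EuclideanSpace ℝ (Fin n) →L[ℝ] EuclideanSpace ℝ (Fin n))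
    (hT2 : T2 = μ • ∫ t in (0:ℝ)..1, fderiv ℝ (gradient G) (s - t • δ)) :
    (∀ u w : EuclideanSpace ℝ (Fin n), ⟪T2 u, w⟫ = ⟪u, T2 w⟫) ∧
    (∀ u : EuclideanSpace ℝ (Fin n), u ≠ 0 → 0 < ⟪T2 u, u⟫) ∧
    T2 s = x ∧ T2 st = xt := by
  have hend : s - δ = μ • st := by rw [hδ, sub_sub_cancel]
  have hseg : ∀ t ∈ Icc (0 : ℝ) 1, s - t • δ ∈ C := fun t ht => by
    rw [show s - t • δ = s + t • (μ • st - s) by rw [hδ]; module]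
    exact hCconv.add_smul_sub_mem hs (hcone st hst μ hμ) ht
  have hgrad : ContDiffOn ℝ 1 (gradient G) C := hG.gradient_of_isOpen hC le_rfl
  have hderiv (t) (ht : t ∈ Icc (0 : ℝ) 1) :
      HasFDerivAt (gradient G) (fderiv ℝ (gradient G) (s - t • δ)) (s - t • δ) :=
    ((hgrad.differentiableOn one_ne_zero).differentiableAt (hC.mem_nhds (hseg t ht))).hasFDerivAt
  have hcont : ContinuousOn (fun t : ℝ => fderiv ℝ (gradient G) (s - t • δ)) (Icc 0 1) :=
    (hgrad.continuousOn_fderiv_of_isOpen hC le_rfl).comp (by fun_prop) hseg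
  have hAδ := intervalIntegral_fderiv_apply_dir_eq_sub hderiv hcont
  have hAs := intervalIntegral_fderiv_apply_base_eq_neg hderiv hcont fun t ht =>
    fderiv_apply_self_eq_neg_of_map_smul_eq_inv_smul (hderiv t ht).differentiableAt
      (hgradhom _ (hseg t ht))
  have hsymm := isSymmetric_intervalIntegral (hcont.intervalIntegrable_of_Icc zero_le_one)
    fun t ht u w => hHessSym _ (hseg t (by rwa [uIcc_of_le zero_le_one] at ht)) u w
  subst hT2 hx hxt
  refine ⟨fun u w => ?_, fun u hu => ?_, ?_, ?_⟩
  · simp only [smul_apply, real_inner_smul_left, real_inner_smul_right]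
    exact congrArg (μ * ·) (hsymm u w)
  · rw [smul_apply, real_inner_smul_left]
    exact mul_pos hμ (inner_intervalIntegral_apply_self_pos zero_lt_one hcont
      fun t ht => hHessPD _ (hseg t ht) u hu)
  · rw [smul_apply, hAs, hend, smul_neg]
  · rw [smul_apply, ← map_smul, ← hend, map_sub, hAs, hAδ, hend]
    abel
end

section
/- Work in ℝⁿ with the standard inner product ⟨·,·⟩. Let x, x̃, s, s̃ ∈ ℝⁿ satisfy: ⟨s̃, x⟩ = ⟨s, x̃⟩ = ϑ for some ϑ > 0; ⟨s, x⟩ > 0; ⟨s̃, x̃⟩ > 0. With μ := ⟨s,x⟩/ϑ, define δ_P := x − μ • x̃ and δ_D := s − μ • s̃, and assume ⟨δ_D, δ_P⟩ > 0. Let H be a symmetric positive-definite n×n real matrix. Define H₁ := H + (⟨s,x⟩)⁻¹ x xᵀ − (⟨s, H s⟩)⁻¹ H s sᵀ H and H₂ := H₁ + (⟨δ_D, δ_P⟩)⁻¹ δ_P δ_Pᵀ − (⟨δ_D, H₁ δ_D⟩)⁻¹ H₁ δ_D δ_Dᵀ H₁. Then H₂ is symmetric positive definite, H₂ s = x, and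 H₂ s̃ = x̃. -/
/-!
Both updates are instances of the DFP update `H ↦ H + y yᵀ/⟨s,y⟩ - H s sᵀ H/⟨s,Hs⟩`, which
satisfies the secant equation `H' s = y` and, when `⟨s,y⟩ > 0`, preserves positive definiteness:
the quadratic form of `H'` at `v` is the Cauchy–Schwarz deficit of `H` at `v` in the direction
`s` plus `⟨y,v⟩²/⟨s,y⟩`, and the two terms cannot vanish together unless `v = 0`.
The second update leaves `H₁ s = x` intact because `⟨s,δ_P⟩ = ⟨δ_D,x⟩ = 0`, and then
`H₂ (s - μ s̃) = x - μ x̃` forces `H₂ s̃ = x̃`.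
-/

open Matrix

namespace Matrix

variable {ι : Type*} [Fintype ι]

noncomputable def dfpUpdate (H : Matrix ι ι ℝ) (s y : ι → ℝ) : Matrix ι ι ℝ :=
  H + (s ⬝ᵥ y)⁻¹ • vecMulVec y y - (s ⬝ᵥ (H *ᵥ s))⁻¹ • vecMulVec (H *ᵥ s) (s ᵥ* H)

lemma dfpUpdate_mulVec (H : Matrix ι ι ℝ) (s y v : ι → ℝ) :
    H.dfpUpdate s y *ᵥ v = H *ᵥ v + ((y ⬝ᵥ v) / (s ⬝ᵥ y)) • y
      - ((s ⬝ᵥ (H *ᵥ v)) / (s ⬝ᵥ (H *ᵥ s))) • (H *ᵥ s) := by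
  simp only [dfpUpdate, sub_mulVec, add_mulVec, smul_mulVec, vecMulVec_mulVec, op_smul_eq_smul,
    smul_smul, ← dotProduct_mulVec, inv_mul_eq_div]

lemma dfpUpdate_mulVec_self {H : Matrix ι ι ℝ} {s y : ι → ℝ} (hsy : s ⬝ᵥ y ≠ 0)
    (hHs : s ⬝ᵥ (H *ᵥ s) ≠ 0) : H.dfpUpdate s y *ᵥ s = y := by
  rw [dfpUpdate_mulVec, dotProduct_comm y, div_self hsy, div_self hHs, one_smul, one_smul,
    add_sub_cancel_left]

lemma dfpUpdate_mulVec_of_dotProduct_eq_zero {H : Matrix ι ι ℝ} {s y v : ι → ℝ}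
    (hyv : y ⬝ᵥ v = 0) (hsHv : s ⬝ᵥ (H *ᵥ v) = 0) : H.dfpUpdate s y *ᵥ v = H *ᵥ v := by
  rw [dfpUpdate_mulVec, hyv, hsHv, zero_div, zero_div, zero_smul, zero_smul, add_zero, sub_zero]

lemma IsHermitian.vecMul_eq_mulVec {H : Matrix ι ι ℝ} (hH : H.IsHermitian) (s : ι → ℝ) :
    s ᵥ* H = H *ᵥ s := by
  rw [← mulVec_transpose, (isHermitian_iff_isSymm.mp hH).eq]

lemma IsHermitian.dotProduct_mulVec_comm {H : Matrix ι ι ℝ} (hH : H.IsHermitian) (u v : ι → ℝ) :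
    u ⬝ᵥ (H *ᵥ v) = v ⬝ᵥ (H *ᵥ u) := by
  rw [dotProduct_mulVec, hH.vecMul_eq_mulVec, dotProduct_comm]

lemma IsHermitian.dfpUpdate {H : Matrix ι ι ℝ} (hH : H.IsHermitian) (s y : ι → ℝ) :
    (H.dfpUpdate s y).IsHermitian := by
  have hvv (a : ι → ℝ) : (vecMulVec a a).IsHermitian := by
    simpa using (posSemidef_vecMulVec_self_star a).isHermitian
  rw [Matrix.dfpUpdate, hH.vecMul_eq_mulVec]
  exact (hH.add ((hvv y).smul (.all _))).sub ((hvv _).smul (.all _))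

lemma IsHermitian.dotProduct_dfpUpdate_mulVec {H : Matrix ι ι ℝ} (hH : H.IsHermitian)
    (s y v : ι → ℝ) :
    v ⬝ᵥ (H.dfpUpdate s y *ᵥ v) = (v ⬝ᵥ (H *ᵥ v) - (s ⬝ᵥ (H *ᵥ v)) ^ 2 / (s ⬝ᵥ (H *ᵥ s)))
      + (y ⬝ᵥ v) ^ 2 / (s ⬝ᵥ y) := by
  rw [dfpUpdate_mulVec, dotProduct_sub, dotProduct_add, dotProduct_smul, dotProduct_smul,
    hH.dotProduct_mulVec_comm v s, dotProduct_comm v y, smul_eq_mul, smul_eq_mul]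
  ring

/-- The vector on the right is `v` minus its `H`-orthogonal projection onto `s`. -/
lemma IsHermitian.dotProduct_mulVec_sub_sq_div {H : Matrix ι ι ℝ} (hH : H.IsHermitian)
    {s : ι → ℝ} (hHs : s ⬝ᵥ (H *ᵥ s) ≠ 0) (v : ι → ℝ) :
    v ⬝ᵥ (H *ᵥ v) - (s ⬝ᵥ (H *ᵥ v)) ^ 2 / (s ⬝ᵥ (H *ᵥ s))
      = (v - (s ⬝ᵥ (H *ᵥ v) / (s ⬝ᵥ (H *ᵥ s))) • s)
        ⬝ᵥ (H *ᵥ (v - (s ⬝ᵥ (H *ᵥ v) / (s ⬝ᵥ (H *ᵥ s))) • s)) := by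
  simp only [mulVec_sub, mulVec_smul, dotProduct_sub, sub_dotProduct, dotProduct_smul,
    smul_dotProduct, smul_eq_mul, hH.dotProduct_mulVec_comm v s]
  field_simp
  ring

lemma PosDef.dotProduct_mulVec_self_pos_of_dotProduct_pos {H : Matrix ι ι ℝ} (hH : H.PosDef)
    {s y : ι → ℝ} (hsy : 0 < s ⬝ᵥ y) : 0 < s ⬝ᵥ (H *ᵥ s) := by
  have hs : s ≠ 0 := by rintro rfl; simp at hsy
  simpa using hH.dotProduct_mulVec_pos hs

lemma PosDef.dfpUpdate {H : Matrix ι ι ℝ} (hH : H.PosDef) {s y : ι → ℝ} (hsy : 0 < s ⬝ᵥ y) :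
    (H.dfpUpdate s y).PosDef := by
  refine .of_dotProduct_mulVec_pos (hH.1.dfpUpdate s y) fun v hv => ?_
  have hHs := (hH.dotProduct_mulVec_self_pos_of_dotProduct_pos hsy).ne'
  rw [star_trivial, hH.1.dotProduct_dfpUpdate_mulVec, hH.1.dotProduct_mulVec_sub_sq_div hHs]
  set w := v - (s ⬝ᵥ (H *ᵥ v) / (s ⬝ᵥ (H *ᵥ s))) • s
  have hw_nonneg : 0 ≤ w ⬝ᵥ (H *ᵥ w) := by simpa using hH.posSemidef.dotProduct_mulVec_nonneg w
  rcases eq_or_ne (y ⬝ᵥ v) 0 with hyv | hyv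
  · -- `v` is not a multiple of `s`, since `y ⬝ᵥ v = 0` while `y ⬝ᵥ s ≠ 0`.
    have hw0 : w ≠ 0 := by
      intro hw0
      have hv_eq : v = (s ⬝ᵥ (H *ᵥ v) / (s ⬝ᵥ (H *ᵥ s))) • s := sub_eq_zero.mp hw0
      rw [hv_eq, dotProduct_smul, smul_eq_mul, dotProduct_comm y s, mul_eq_zero] at hyv
      exact hv (hv_eq.trans (by rw [hyv.resolve_right hsy.ne', zero_smul]))
    have := hH.dotProduct_mulVec_pos hw0
    rw [star_trivial] at this
    rw [hyv]; simpa using this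
  · have : 0 < (y ⬝ᵥ v) ^ 2 / (s ⬝ᵥ y) := by positivity
    linarith

end Matrix

theorem stmt_10_general (n : ℕ) (ϑ : ℝ) (hϑ : 0 < ϑ)
    (x xt s st : Fin n → ℝ)
    (h1 : st ⬝ᵥ x = ϑ) (h2 : s ⬝ᵥ xt = ϑ)
    (h3 : 0 < s ⬝ᵥ x)
    (μ : ℝ) (hμ : μ = s ⬝ᵥ x / ϑ)
    (δP δD : Fin n → ℝ) (hδP : δP = x - μ • xt) (hδD : δD = s - μ • st)
    (h5 : 0 < δD ⬝ᵥ δP)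
    (H : Matrix (Fin n) (Fin n) ℝ) (hH : H.PosDef)
    (H1 H2 : Matrix (Fin n) (Fin n) ℝ)
    (hH1 : H1 = H + (s ⬝ᵥ x)⁻¹ • vecMulVec x x
        - (s ⬝ᵥ (H *ᵥ s))⁻¹ • vecMulVec (H *ᵥ s) (s ᵥ* H))
    (hH2 : H2 = H1 + (δD ⬝ᵥ δP)⁻¹ • vecMulVec δP δP
        - (δD ⬝ᵥ (H1 *ᵥ δD))⁻¹ • vecMulVec (H1 *ᵥ δD) (δD ᵥ* H1)) :
    H2.PosDef ∧ H2 *ᵥ s = x ∧ H2 *ᵥ st = xt := by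
  change H1 = H.dfpUpdate s x at hH1
  change H2 = H1.dfpUpdate δD δP at hH2
  have hμϑ : μ * ϑ = s ⬝ᵥ x := by rw [hμ, div_mul_cancel₀ _ hϑ.ne']
  have hs_δP : δP ⬝ᵥ s = 0 := by
    rw [dotProduct_comm, hδP, dotProduct_sub, dotProduct_smul, h2, smul_eq_mul, hμϑ, sub_self]
  have hδD_x : δD ⬝ᵥ x = 0 := by
    rw [hδD, sub_dotProduct, smul_dotProduct, h1, smul_eq_mul, hμϑ, sub_self]
  have hH1_pd : H1.PosDef := hH1 ▸ hH.dfpUpdate h3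
  have hH1_s : H1 *ᵥ s = x :=
    hH1 ▸ dfpUpdate_mulVec_self h3.ne' (hH.dotProduct_mulVec_self_pos_of_dotProduct_pos h3).ne'
  have hH2_δD : H2 *ᵥ δD = δP :=
    hH2 ▸ dfpUpdate_mulVec_self h5.ne' (hH1_pd.dotProduct_mulVec_self_pos_of_dotProduct_pos h5).ne'
  have hH2_s : H2 *ᵥ s = x := by
    rw [hH2, dfpUpdate_mulVec_of_dotProduct_eq_zero hs_δP (by rw [hH1_s, hδD_x]), hH1_s]
  refine ⟨hH2 ▸ hH1_pd.dfpUpdate h5, hH2_s, ?_⟩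
  have hμ0 : μ ≠ 0 := by rw [hμ]; positivity
  refine smul_right_injective _ hμ0 (sub_right_injective (b := x) ?_)
  calc x - μ • H2 *ᵥ st = H2 *ᵥ δD := by rw [hδD, mulVec_sub, mulVec_smul, hH2_s]
    _ = x - μ • xt := by rw [hH2_δD, hδP]

/-- Theorem 4.1: the pair of DFP-type low-rank updates produces a symmetric
positive-definite matrix mapping `s` to `x` and `s̃` to `x̃`. -/
theorem stmt_10 (n : ℕ) (ϑ : ℝ) (hϑ : 0 < ϑ)
    (x xt s st : Fin n → ℝ)
    (h1 : st ⬝ᵥ x = ϑ) (h2 : s ⬝ᵥ xt = ϑ)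
    (h3 : 0 < s ⬝ᵥ x) (h4 : 0 < st ⬝ᵥ xt)
    (μ : ℝ) (hμ : μ = s ⬝ᵥ x / ϑ)
    (δP δD : Fin n → ℝ) (hδP : δP = x - μ • xt) (hδD : δD = s - μ • st)
    (h5 : 0 < δD ⬝ᵥ δP)
    (H : Matrix (Fin n) (Fin n) ℝ) (hH : H.PosDef)
    (H1 H2 : Matrix (Fin n) (Fin n) ℝ)
    (hH1 : H1 = H + (s ⬝ᵥ x)⁻¹ • vecMulVec x x
        - (s ⬝ᵥ (H *ᵥ s))⁻¹ • vecMulVec (H *ᵥ s) (s ᵥ* H))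
    (hH2 : H2 = H1 + (δD ⬝ᵥ δP)⁻¹ • vecMulVec δP δP
        - (δD ⬝ᵥ (H1 *ᵥ δD))⁻¹ • vecMulVec (H1 *ᵥ δD) (δD ᵥ* H1)) :
    H2.PosDef ∧ H2 *ᵥ s = x ∧ H2 *ᵥ st = xt :=
  stmt_10_general n ϑ hϑ x xt s st h1 h2 h3 μ hμ δP δD hδP hδD h5 H hH H1 H2 hH1 hH2
end

section
/- Work in ℝⁿ with the standard inner product ⟨·,·⟩. Let x, x̃, s, s̃ ∈ ℝⁿ satisfy: ⟨s̃, x⟩ = ⟨s, x̃⟩ = ϑ for some ϑ > 0; ⟨s, x⟩ > 0; ⟨s̃, x̃⟩ > 0. With μ := ⟨s,x⟩/ϑ, define δ_P := x − μ • x̃ and δ_D := s − μ • s̃, and assume ⟨δ_D, δ_P⟩ > 0. Let H be a symmetric positive-definite n×n real matrix. Define H₁ := (I − (⟨s,x⟩)⁻¹ x sᵀ) H (I − (⟨s,x⟩)⁻¹ s xᵀ) + (⟨s,x⟩)⁻¹ x xᵀ and H₂ := (I − (⟨δ_D, δ_P⟩)⁻¹ δ_P δ_Dᵀ) H₁ (I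 − (⟨δ_D, δ_P⟩)⁻¹ δ_D δ_Pᵀ) + (⟨δ_D, δ_P⟩)⁻¹ δ_P δ_Pᵀ. Then H₂ is symmetric positive definite, H₂ s = x, and H₂ s̃ = x̃. -/
/-!
Both updates are instances of the BFGS update `bfgsUpdate H s y`, which is positive definite
whenever `H` is and `⟨s, y⟩ > 0`, and which maps `s` to `y`. It moreover keeps every secant pair
`H v = w` with `⟨y, v⟩ = ⟨s, w⟩ = 0`. The first update gives `H₁ s = x`; the choice of `μ` makes
`⟨δ_P, s⟩ = ⟨δ_D, x⟩ = 0`, so the second update keeps `H₂ s = x` and adds `H₂ δ_D = δ_P`.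
Since `s̃ = μ⁻¹ (s - δ_D)` and `x̃ = μ⁻¹ (x - δ_P)`, linearity gives `H₂ s̃ = x̃`.
-/

open Matrix

namespace Matrix

variable {ι : Type*} [Fintype ι] [DecidableEq ι]

/-- The BFGS update, in inverse form, of `H` for the step `s` and the gradient change `y`. -/
noncomputable def bfgsUpdate (H : Matrix ι ι ℝ) (s y : ι → ℝ) : Matrix ι ι ℝ :=
  (1 - (s ⬝ᵥ y)⁻¹ • vecMulVec y s) * H * (1 - (s ⬝ᵥ y)⁻¹ • vecMulVec s y)
    + (s ⬝ᵥ y)⁻¹ • vecMulVec y y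

lemma one_sub_smul_vecMulVec_mulVec {R : Type*} [CommRing R] (c : R) (u w v : ι → R) :
    (1 - c • vecMulVec u w) *ᵥ v = v - (c * (w ⬝ᵥ v)) • u := by
  rw [sub_mulVec, one_mulVec, smul_mulVec, vecMulVec_mulVec, op_smul_eq_smul, smul_smul]

lemma transpose_bfgsUpdate (H : Matrix ι ι ℝ) (s y : ι → ℝ) :
    (bfgsUpdate H s y)ᵀ = bfgsUpdate Hᵀ s y := by
  simp only [bfgsUpdate, transpose_add, transpose_mul, transpose_sub, transpose_smul,
    transpose_one, transpose_vecMulVec, Matrix.mul_assoc]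

lemma bfgsUpdate_mulVec_self (H : Matrix ι ι ℝ) {s y : ι → ℝ} (h : s ⬝ᵥ y ≠ 0) :
    bfgsUpdate H s y *ᵥ s = y := by
  have hs : (1 - (s ⬝ᵥ y)⁻¹ • vecMulVec s y) *ᵥ s = 0 := by
    rw [one_sub_smul_vecMulVec_mulVec, dotProduct_comm y, inv_mul_cancel₀ h, one_smul, sub_self]
  rw [bfgsUpdate, add_mulVec, ← mulVec_mulVec, hs, mulVec_zero, zero_add, smul_mulVec,
    vecMulVec_mulVec, op_smul_eq_smul, smul_smul, dotProduct_comm y, inv_mul_cancel₀ h,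
    one_smul]

lemma bfgsUpdate_mulVec_of_dotProduct_eq_zero {H : Matrix ι ι ℝ} {s y v w : ι → ℝ}
    (hv : y ⬝ᵥ v = 0) (hw : s ⬝ᵥ w = 0) (hHv : H *ᵥ v = w) :
    bfgsUpdate H s y *ᵥ v = w := by
  rw [bfgsUpdate, add_mulVec, ← mulVec_mulVec, ← mulVec_mulVec,
    one_sub_smul_vecMulVec_mulVec _ s y v, hv, mul_zero, zero_smul, sub_zero, hHv,
    one_sub_smul_vecMulVec_mulVec, hw, mul_zero, zero_smul, sub_zero, smul_mulVec,
    vecMulVec_mulVec, hv, MulOpposite.op_zero, zero_smul, smul_zero, add_zero]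

lemma dotProduct_bfgsUpdate_mulVec (H : Matrix ι ι ℝ) (s y v : ι → ℝ) :
    v ⬝ᵥ (bfgsUpdate H s y *ᵥ v)
      = (v - ((s ⬝ᵥ y)⁻¹ * (y ⬝ᵥ v)) • s) ⬝ᵥ (H *ᵥ (v - ((s ⬝ᵥ y)⁻¹ * (y ⬝ᵥ v)) • s))
        + (s ⬝ᵥ y)⁻¹ * (y ⬝ᵥ v) ^ 2 := by
  rw [bfgsUpdate, add_mulVec, dotProduct_add, ← mulVec_mulVec, ← mulVec_mulVec,
    one_sub_smul_vecMulVec_mulVec _ s y v, dotProduct_mulVec, ← mulVec_transpose, transpose_sub,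
    transpose_one, transpose_smul, transpose_vecMulVec, one_sub_smul_vecMulVec_mulVec,
    smul_mulVec, vecMulVec_mulVec, op_smul_eq_smul, dotProduct_smul, dotProduct_smul,
    smul_eq_mul, smul_eq_mul, dotProduct_comm v y, sq]

lemma PosDef.bfgsUpdate {H : Matrix ι ι ℝ} (hH : H.PosDef) {s y : ι → ℝ} (h : 0 < s ⬝ᵥ y) :
    (bfgsUpdate H s y).PosDef := by
  refine PosDef.of_dotProduct_mulVec_pos ?_ fun v hv => ?_
  · rw [isHermitian_iff_isSymm, IsSymm, transpose_bfgsUpdate,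
      ← conjTranspose_eq_transpose_of_trivial, hH.isHermitian.eq]
  rw [star_trivial, dotProduct_bfgsUpdate_mulVec]
  set u := v - ((s ⬝ᵥ y)⁻¹ * (y ⬝ᵥ v)) • s with hu
  have hρ : 0 < (s ⬝ᵥ y)⁻¹ := inv_pos.mpr h
  by_cases hyv : y ⬝ᵥ v = 0
  · have huv : u = v := by rw [hu, hyv, mul_zero, zero_smul, sub_zero]
    have hHu : 0 < u ⬝ᵥ (H *ᵥ u) := by simpa using hH.dotProduct_mulVec_pos (huv ▸ hv)
    rw [hyv]
    linarith
  · have hHu : 0 ≤ u ⬝ᵥ (H *ᵥ u) := by simpa using hH.posSemidef.dotProduct_mulVec_nonneg u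
    have := mul_pos hρ (pow_two_pos_of_ne_zero hyv)
    linarith

end Matrix

theorem stmt_11_general (n : ℕ) (ϑ : ℝ) (hϑ : 0 < ϑ)
    (x xt s st : Fin n → ℝ)
    (h1 : st ⬝ᵥ x = ϑ) (h2 : s ⬝ᵥ xt = ϑ)
    (h3 : 0 < s ⬝ᵥ x)
    (μ : ℝ) (hμ : μ = s ⬝ᵥ x / ϑ)
    (δP δD : Fin n → ℝ) (hδP : δP = x - μ • xt) (hδD : δD = s - μ • st)
    (h5 : 0 < δD ⬝ᵥ δP)
    (H : Matrix (Fin n) (Fin n) ℝ) (hH : H.PosDef)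
    (H1 H2 : Matrix (Fin n) (Fin n) ℝ)
    (hH1 : H1 = (1 - (s ⬝ᵥ x)⁻¹ • vecMulVec x s) * H * (1 - (s ⬝ᵥ x)⁻¹ • vecMulVec s x)
        + (s ⬝ᵥ x)⁻¹ • vecMulVec x x)
    (hH2 : H2 = (1 - (δD ⬝ᵥ δP)⁻¹ • vecMulVec δP δD) * H1 * (1 - (δD ⬝ᵥ δP)⁻¹ • vecMulVec δD δP)
        + (δD ⬝ᵥ δP)⁻¹ • vecMulVec δP δP) :
    H2.PosDef ∧ H2 *ᵥ s = x ∧ H2 *ᵥ st = xt := by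
  change H1 = bfgsUpdate H s x at hH1
  change H2 = bfgsUpdate H1 δD δP at hH2
  have hμϑ : μ * ϑ = s ⬝ᵥ x := by rw [hμ, div_mul_cancel₀ _ hϑ.ne']
  have hμ0 : μ ≠ 0 := by rw [hμ]; exact (div_pos h3 hϑ).ne'
  have hδP_s : δP ⬝ᵥ s = 0 := by
    rw [hδP, sub_dotProduct, smul_dotProduct, dotProduct_comm xt, h2, smul_eq_mul, hμϑ,
      dotProduct_comm, sub_self]
  have hδD_x : δD ⬝ᵥ x = 0 := by
    rw [hδD, sub_dotProduct, smul_dotProduct, h1, smul_eq_mul, hμϑ, sub_self]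
  have hH1s : H1 *ᵥ s = x := hH1 ▸ bfgsUpdate_mulVec_self H h3.ne'
  have hH2s : H2 *ᵥ s = x := hH2 ▸ bfgsUpdate_mulVec_of_dotProduct_eq_zero hδP_s hδD_x hH1s
  have hH2δD : H2 *ᵥ δD = δP := hH2 ▸ bfgsUpdate_mulVec_self H1 h5.ne'
  have hst : st = μ⁻¹ • (s - δD) := by
    rw [hδD, sub_sub_cancel, smul_smul, inv_mul_cancel₀ hμ0, one_smul]
  refine ⟨hH2 ▸ (hH1 ▸ hH.bfgsUpdate h3).bfgsUpdate h5, hH2s, ?_⟩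
  rw [hst, mulVec_smul, mulVec_sub, hH2s, hH2δD, hδP, sub_sub_cancel, smul_smul,
    inv_mul_cancel₀ hμ0, one_smul]

/-- Theorem 4.2: the pair of BFGS-type low-rank updates produces a symmetric
positive-definite matrix mapping `s` to `x` and `s̃` to `x̃`. -/
theorem stmt_11 (n : ℕ) (ϑ : ℝ) (hϑ : 0 < ϑ)
    (x xt s st : Fin n → ℝ)
    (h1 : st ⬝ᵥ x = ϑ) (h2 : s ⬝ᵥ xt = ϑ)
    (h3 : 0 < s ⬝ᵥ x) (h4 : 0 < st ⬝ᵥ xt)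
    (μ : ℝ) (hμ : μ = s ⬝ᵥ x / ϑ)
    (δP δD : Fin n → ℝ) (hδP : δP = x - μ • xt) (hδD : δD = s - μ • st)
    (h5 : 0 < δD ⬝ᵥ δP)
    (H : Matrix (Fin n) (Fin n) ℝ) (hH : H.PosDef)
    (H1 H2 : Matrix (Fin n) (Fin n) ℝ)
    (hH1 : H1 = (1 - (s ⬝ᵥ x)⁻¹ • vecMulVec x s) * H * (1 - (s ⬝ᵥ x)⁻¹ • vecMulVec s x)
        + (s ⬝ᵥ x)⁻¹ • vecMulVec x x)
    (hH2 : H2 = (1 - (δD ⬝ᵥ δP)⁻¹ • vecMulVec δP δD) * H1 * (1 - (δD ⬝ᵥ δP)⁻¹ • vecMulVec δD δP)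
        + (δD ⬝ᵥ δP)⁻¹ • vecMulVec δP δP) :
    H2.PosDef ∧ H2 *ᵥ s = x ∧ H2 *ᵥ st = xt :=
  stmt_11_general n ϑ hϑ x xt s st h1 h2 h3 μ hμ δP δD hδP hδD h5 H hH H1 H2 hH1 hH2
end

section
/- Let x, x̃, s, s̃ ∈ ℝⁿ and let A and B be symmetric positive-definite n×n real matrices with A s = B s = x and A s̃ = B s̃ = x̃. Let G := A^{1/2} (A^{-1/2} B A^{-1/2})^{1/2} A^{1/2} be the operator geometric mean of A and B, where M^{1/2} denotes the unique symmetric positive-definite square root. Then G is symmetric positive definite and satisfies G s = x and G s̃ = x̃. -/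
/-!
Write `P = A^{1/2}` and `C = P⁻¹ B P⁻¹`. For `w = P s` we get `C w = P⁻¹ B s = P⁻¹ A s = w`.
A positive-semidefinite matrix fixes every vector its square fixes, so `C^{1/2} w = w` and
`G s = P C^{1/2} P s = A s = x`; likewise for `s̃`. Positive definiteness of `G` holds because
congruence by the invertible Hermitian matrices `P` and `P⁻¹` preserves it.
-/

open Matrix

open Classical in
/-- The unique symmetric positive-semidefinite square root of a positive
semidefinite matrix (junk value `0` otherwise). -/
noncomputable def msqrt {n : ℕ} (M : Matrix (Fin n) (Fin n) ℝ) :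
    Matrix (Fin n) (Fin n) ℝ :=
  if h : M.PosSemidef then
    h.1.eigenvectorUnitary.1 * diagonal ((↑) ∘ (√·) ∘ h.1.eigenvalues) *
      (star h.1.eigenvectorUnitary : Matrix (Fin n) (Fin n) ℝ) else 0

namespace Matrix

open scoped ComplexOrder

theorem PosSemidef.mulVec_eq_self_of_mul_self_mulVec_eq_self {𝕜 ι : Type*} [RCLike 𝕜]
    [Fintype ι] [DecidableEq ι] {M : Matrix ι ι 𝕜} (hM : M.PosSemidef) {v : ι → 𝕜}
    (h : (M * M) *ᵥ v = v) : M *ᵥ v = v := by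
  have hM1 : IsUnit (M + 1) := (PosDef.posSemidef_add hM PosDef.one).isUnit
  have key : (M + 1) *ᵥ (M *ᵥ v - v) = (M + 1) *ᵥ 0 := by
    rw [mulVec_zero, mulVec_sub, add_mulVec, add_mulVec, one_mulVec, one_mulVec,
      mulVec_mulVec, h]
    abel
  exact sub_eq_zero.mp (mulVec_injective_of_isUnit hM1 key)

end Matrix

section msqrt

variable {n : ℕ} {M : Matrix (Fin n) (Fin n) ℝ}

theorem msqrt_eq (h : M.PosSemidef) :
    msqrt M = h.1.eigenvectorUnitary.1 * diagonal ((↑) ∘ (√·) ∘ h.1.eigenvalues) *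
      (star h.1.eigenvectorUnitary : Matrix (Fin n) (Fin n) ℝ) := dif_pos h

theorem msqrt_posSemidef (h : M.PosSemidef) : (msqrt M).PosSemidef := by
  rw [msqrt_eq h, star_eq_conjTranspose]
  refine PosSemidef.mul_mul_conjTranspose_same ?_ _
  exact posSemidef_diagonal_iff.mpr fun i => Real.sqrt_nonneg _

theorem msqrt_mul_self (h : M.PosSemidef) : msqrt M * msqrt M = M := by
  set U : Matrix (Fin n) (Fin n) ℝ := h.1.eigenvectorUnitary.1
  set D : Matrix (Fin n) (Fin n) ℝ := diagonal ((↑) ∘ (√·) ∘ h.1.eigenvalues)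
  have hU : star U * U = 1 := UnitaryGroup.star_mul_self _
  have hDD : D * D = diagonal ((↑) ∘ h.1.eigenvalues) := by
    rw [diagonal_mul_diagonal]
    congr 1
    funext i
    simp [Real.mul_self_sqrt (h.eigenvalues_nonneg i)]
  calc msqrt M * msqrt M = U * (D * (star U * U) * D) * star U := by
        rw [msqrt_eq h]; simp only [mul_assoc]; rfl
    _ = M := by
      rw [hU, mul_one, hDD]
      conv_rhs => rw [h.1.spectral_theorem]
      rfl

theorem msqrt_posDef (h : M.PosDef) : (msqrt M).PosDef := by
  refine (msqrt_posSemidef h.posSemidef).posDef_iff_isUnit.mpr ?_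
  have hdet : (msqrt M).det * (msqrt M).det = M.det := by
    rw [← det_mul, msqrt_mul_self h.posSemidef]
  rw [isUnit_iff_isUnit_det]
  exact isUnit_of_mul_isUnit_left (by rw [hdet]; exact h.det_pos.ne'.isUnit)

end msqrt

section geomMean

variable {n : ℕ} {A B : Matrix (Fin n) (Fin n) ℝ}

noncomputable def geomMean (A B : Matrix (Fin n) (Fin n) ℝ) : Matrix (Fin n) (Fin n) ℝ :=
  msqrt A * msqrt ((msqrt A)⁻¹ * B * (msqrt A)⁻¹) * msqrt A

theorem geomMean_posDef (hA : A.PosDef) (hB : B.PosDef) : (geomMean A B).PosDef := by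
  have hP := msqrt_posDef hA
  have hC := (IsUnit.posDef_star_left_conjugate_iff hP.inv.isUnit).mpr hB
  rw [star_eq_conjTranspose, hP.inv.isHermitian.eq] at hC
  have hG := (IsUnit.posDef_star_left_conjugate_iff hP.isUnit).mpr (msqrt_posDef hC)
  rwa [star_eq_conjTranspose, hP.isHermitian.eq] at hG

theorem geomMean_mulVec_of_mulVec_eq (hA : A.PosDef) (hB : B.PosSemidef) {s x : Fin n → ℝ}
    (hAs : A *ᵥ s = x) (hBs : B *ᵥ s = x) : geomMean A B *ᵥ s = x := by
  set P := msqrt A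
  set C := P⁻¹ * B * P⁻¹
  have hPP : P * P = A := msqrt_mul_self hA.posSemidef
  have hPinv : P⁻¹ * P = 1 := nonsing_inv_mul P ((msqrt_posDef hA).isUnit.map detMonoidHom)
  have hC : C.PosSemidef := by
    have := hB.conjTranspose_mul_mul_same P⁻¹
    rwa [(msqrt_posDef hA).inv.isHermitian.eq] at this
  have hCw : (msqrt C * msqrt C) *ᵥ (P *ᵥ s) = P *ᵥ s := calc
    (msqrt C * msqrt C) *ᵥ (P *ᵥ s) = P⁻¹ *ᵥ (B *ᵥ s) := by
      rw [msqrt_mul_self hC, mulVec_mulVec, mul_assoc, hPinv, mul_one, mulVec_mulVec]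
    _ = P *ᵥ s := by
      rw [hBs, ← hAs, ← hPP, mulVec_mulVec, ← mul_assoc, hPinv, one_mul]
  calc geomMean A B *ᵥ s = P *ᵥ (msqrt C *ᵥ (P *ᵥ s)) := by
        rw [mulVec_mulVec, mulVec_mulVec]; rfl
    _ = x := by
      rw [(msqrt_posSemidef hC).mulVec_eq_self_of_mul_self_mulVec_eq_self hCw, mulVec_mulVec,
        hPP, hAs]

end geomMean

/-- The operator geometric mean of two local primal-dual metrics (both mapping
`s` to `x` and `s̃` to `x̃`) is again a local primal-dual metric. -/
theorem stmt_13 (n : ℕ) (x xt s st : Fin n → ℝ)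
    (A B : Matrix (Fin n) (Fin n) ℝ) (hA : A.PosDef) (hB : B.PosDef)
    (hAs : A *ᵥ s = x) (hBs : B *ᵥ s = x)
    (hAst : A *ᵥ st = xt) (hBst : B *ᵥ st = xt)
    (G : Matrix (Fin n) (Fin n) ℝ)
    (hG : G = msqrt A * msqrt ((msqrt A)⁻¹ * B * (msqrt A)⁻¹) * msqrt A) :
    G.PosDef ∧ G *ᵥ s = x ∧ G *ᵥ st = xt := by
  subst hG
  exact ⟨geomMean_posDef hA hB, geomMean_mulVec_of_mulVec_eq hA hB.posSemidef hAs hBs,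
    geomMean_mulVec_of_mulVec_eq hA hB.posSemidef hAst hBst⟩
end

section
/- Let M be a symmetric positive-definite n×n real matrix. For z ∈ ℝⁿ define ‖z‖ := ⟨M z, z⟩^{1/2} and the dual norm ‖z‖^* := ⟨M⁻¹ z, z⟩^{1/2}, and for an n×n real matrix X define the operator norm ‖X‖_op := sup { ‖X u‖^* : u ∈ ℝⁿ, ‖u‖ ≤ 1 }. Then for all h, u ∈ ℝⁿ, ‖h hᵀ − u uᵀ‖_op ≤ ‖h − u‖^* · ‖h + u‖^*. -/
/-!
Since `2 (h hᵀ - u uᵀ) = (h - u)(h + u)ᵀ + (h + u)(h - u)ᵀ`, the vector `2 (h hᵀ - u uᵀ) z` is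
`⟨h + u, z⟩ (h - u) + ⟨h - u, z⟩ (h + u)`. The triangle inequality for `‖·‖^*` and the duality
bound `|⟨v, z⟩| ≤ ‖v‖^* ‖z‖` (Cauchy–Schwarz for `M⁻¹` applied to `v` and `M z`) then give
`‖(h hᵀ - u uᵀ) z‖^* ≤ ‖h - u‖^* ‖h + u‖^* ‖z‖`.
-/

open Matrix

section LocalNorm

variable {n : Type*} [Fintype n]

noncomputable def localNorm (M : Matrix n n ℝ) (x : n → ℝ) : ℝ := √((M *ᵥ x) ⬝ᵥ x)

section PosSemidef

variable {M : Matrix n n ℝ} (hM : M.PosSemidef)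
include hM

-- `n → ℝ` already carries the sup norm, so the structures induced by `M` are passed explicitly.
lemma localNorm_eq_norm (x : n → ℝ) :
    localNorm M x = @norm _ (M.toSeminormedAddCommGroup hM).toNorm x :=
  (@norm_eq_sqrt_re_inner ℝ _ _ (M.toSeminormedAddCommGroup hM) (M.toInnerProductSpace hM) x).symm

lemma abs_mulVec_dotProduct_le (x y : n → ℝ) :
    |(M *ᵥ y) ⬝ᵥ x| ≤ localNorm M x * localNorm M y := by
  rw [localNorm_eq_norm hM, localNorm_eq_norm hM]
  exact @abs_real_inner_le_norm _ (M.toSeminormedAddCommGroup hM) (M.toInnerProductSpace hM) x y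

lemma localNorm_add_le (x y : n → ℝ) :
    localNorm M (x + y) ≤ localNorm M x + localNorm M y := by
  simp only [localNorm_eq_norm hM]
  exact @norm_add_le _ (M.toSeminormedAddCommGroup hM).toSeminormedAddGroup x y

lemma localNorm_smul (c : ℝ) (x : n → ℝ) :
    localNorm M (c • x) = |c| * localNorm M x := by
  simp only [localNorm_eq_norm hM]
  let E := M.toSeminormedAddCommGroup hM
  exact @norm_smul ℝ _ _ E.toNorm _
    (@NormedSpace.toNormSMulClass ℝ _ _ E (M.toInnerProductSpace hM).toNormedSpace) c x

end PosSemidef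

lemma two_smul_vecMulVec_sub_vecMulVec_mulVec {R : Type*} [CommRing R] (h u z : n → R) :
    (2 : R) • ((vecMulVec h h - vecMulVec u u) *ᵥ z) =
      ((h + u) ⬝ᵥ z) • (h - u) + ((h - u) ⬝ᵥ z) • (h + u) := by
  simp only [sub_mulVec, vecMulVec_mulVec, op_smul_eq_smul, add_dotProduct, sub_dotProduct]
  module

variable [DecidableEq n] {M : Matrix n n ℝ}

lemma abs_dotProduct_le_localNorm_inv_mul (hM : M.PosDef) (v z : n → ℝ) :
    |v ⬝ᵥ z| ≤ localNorm M⁻¹ v * localNorm M z := by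
  have hz : M⁻¹ *ᵥ (M *ᵥ z) = z := by
    rw [mulVec_mulVec, nonsing_inv_mul M (M.isUnit_iff_isUnit_det.mp hM.isUnit), one_mulVec]
  have hMz : localNorm M⁻¹ (M *ᵥ z) = localNorm M z := by
    rw [localNorm, localNorm, hz, dotProduct_comm]
  simpa only [hz, hMz, dotProduct_comm z] using
    abs_mulVec_dotProduct_le hM.inv.posSemidef v (M *ᵥ z)

lemma localNorm_inv_vecMulVec_sub_vecMulVec_mulVec_le (hM : M.PosDef) (h u z : n → ℝ) :
    localNorm M⁻¹ ((vecMulVec h h - vecMulVec u u) *ᵥ z) ≤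
      localNorm M⁻¹ (h - u) * localNorm M⁻¹ (h + u) * localNorm M z := by
  have hM' := hM.inv.posSemidef
  have hdual := abs_dotProduct_le_localNorm_inv_mul hM
  have : 2 * localNorm M⁻¹ ((vecMulVec h h - vecMulVec u u) *ᵥ z) ≤
      2 * (localNorm M⁻¹ (h - u) * localNorm M⁻¹ (h + u) * localNorm M z) := calc
    _ = localNorm M⁻¹ ((2 : ℝ) • ((vecMulVec h h - vecMulVec u u) *ᵥ z)) := by
      rw [localNorm_smul hM', abs_two]
    _ = localNorm M⁻¹ (((h + u) ⬝ᵥ z) • (h - u) + ((h - u) ⬝ᵥ z) • (h + u)) := by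
      rw [two_smul_vecMulVec_sub_vecMulVec_mulVec]
    _ ≤ |(h + u) ⬝ᵥ z| * localNorm M⁻¹ (h - u) + |(h - u) ⬝ᵥ z| * localNorm M⁻¹ (h + u) := by
      grw [localNorm_add_le hM', localNorm_smul hM', localNorm_smul hM']
    _ ≤ localNorm M⁻¹ (h + u) * localNorm M z * localNorm M⁻¹ (h - u) +
          localNorm M⁻¹ (h - u) * localNorm M z * localNorm M⁻¹ (h + u) :=
      add_le_add (mul_le_mul_of_nonneg_right (hdual _ _) (Real.sqrt_nonneg _))
        (mul_le_mul_of_nonneg_right (hdual _ _) (Real.sqrt_nonneg _))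
    _ = 2 * (localNorm M⁻¹ (h - u) * localNorm M⁻¹ (h + u) * localNorm M z) := by ring
  linarith

end LocalNorm

/-- Lemma 7.1 (difference-of-squares bound):
`‖h hᵀ - u uᵀ‖_op ≤ ‖h - u‖^* ‖h + u‖^*` in the local norms induced by a
symmetric positive-definite `M`. -/
theorem stmt_16 (n : ℕ) (M : Matrix (Fin n) (Fin n) ℝ) (hM : M.PosDef)
    (h u : Fin n → ℝ) :
    sSup {r : ℝ | ∃ z : Fin n → ℝ, Real.sqrt ((M *ᵥ z) ⬝ᵥ z) ≤ 1 ∧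
        r = Real.sqrt ((M⁻¹ *ᵥ ((vecMulVec h h - vecMulVec u u) *ᵥ z)) ⬝ᵥ
              ((vecMulVec h h - vecMulVec u u) *ᵥ z))}
      ≤ Real.sqrt ((M⁻¹ *ᵥ (h - u)) ⬝ᵥ (h - u)) *
          Real.sqrt ((M⁻¹ *ᵥ (h + u)) ⬝ᵥ (h + u)) := by
  refine Real.sSup_le ?_ (by positivity)
  rintro _ ⟨z, hz, rfl⟩
  exact (localNorm_inv_vecMulVec_sub_vecMulVec_mulVec_le hM h u z).trans
    (mul_le_of_le_one_right (mul_nonneg (Real.sqrt_nonneg _) (Real.sqrt_nonneg _)) hz)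
end
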